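/- arXiv:1210.3500 — 5 statements merged into one kernel-verified Lean document; each statement's English description precedes it below -/
import Mathlib

section
/- Let p_t(x,y) = 2 ∑_{n=1}^∞ exp(-(π²/2) n² t) sin(π n x) sin(π n y) for x, y ∈ [0,1] and t > 0 (the transition density of Brownian motion killed upon exiting (0,1)). Define E_t = π² ∑_{n=2}^∞ n² exp(-π²(n²-1)t/2). Then for all x, y ∈ [0,1] and t > 0: |exp(π² t/2) · p_t(x,y) − 2 sin(π x) sin(π y)| ≤ E_t · 2 sin(π x) sin(π y). -/
/-!
Multiplying by `exp (π² t / 2)` turns the `n`-th term of `p_t(x,y)` into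
`2 exp (-(π² t / 2)(n² - 1)) sin (π n x) sin (π n y)`, and the `n = 1` term is exactly
`2 sin (π x) sin (π y)`. For `x ∈ [0, 1]` we have `|sin (π n x)| ≤ n sin (π x)`, so each
remaining term is at most `2 n² exp (-(π² t / 2)(n² - 1)) sin (π x) sin (π y)`; these bounds
sum to at most `E_t · 2 sin (π x) sin (π y)`, with a spare factor `π² ≥ 1`.
-/

open Real

/-- The transition density of Brownian motion killed upon exiting `(0,1)`:
`p_t(x,y) = 2 ∑_{n=1}^∞ exp(-(π²/2) n² t) sin(π n x) sin(π n y)`. -/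
noncomputable def pKilled (t x y : ℝ) : ℝ :=
  2 * ∑' n : ℕ, Real.exp (-(π ^ 2 / 2) * ((n : ℝ) + 1) ^ 2 * t) *
    Real.sin (π * ((n : ℝ) + 1) * x) * Real.sin (π * ((n : ℝ) + 1) * y)

/-- The error term `E_t = π² ∑_{n=2}^∞ n² exp(-π² (n²-1) t / 2)`. -/
noncomputable def Eerr (t : ℝ) : ℝ :=
  π ^ 2 * ∑' n : ℕ, ((n : ℝ) + 2) ^ 2 * Real.exp (-π ^ 2 * (((n : ℝ) + 2) ^ 2 - 1) * t / 2)

open Set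

lemma abs_sin_nat_mul_le (n : ℕ) (θ : ℝ) : |sin (n * θ)| ≤ n * |sin θ| := by
  induction n with
  | zero => simp
  | succ n ih =>
    push_cast
    rw [add_one_mul, sin_add]
    calc |sin (n * θ) * cos θ + cos (n * θ) * sin θ|
        ≤ |sin (n * θ)| * |cos θ| + |cos (n * θ)| * |sin θ| := by
          rw [← abs_mul, ← abs_mul]; exact abs_add_le _ _
      _ ≤ (n : ℝ) * |sin θ| * 1 + 1 * |sin θ| := by
          gcongr
          exacts [abs_cos_le_one θ, abs_cos_le_one _]
      _ = (n + 1) * |sin θ| := by ring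

lemma sin_pi_mul_nonneg {x : ℝ} (hx : x ∈ Icc (0 : ℝ) 1) : 0 ≤ sin (π * x) :=
  sin_nonneg_of_nonneg_of_le_pi (mul_nonneg pi_pos.le hx.1)
    (mul_le_of_le_one_right pi_pos.le hx.2)

lemma abs_sin_pi_mul_nat_mul_le (n : ℕ) {x : ℝ} (hx : x ∈ Icc (0 : ℝ) 1) :
    |sin (π * n * x)| ≤ n * sin (π * x) := by
  rw [mul_comm π, mul_assoc, ← abs_of_nonneg (sin_pi_mul_nonneg hx)]
  exact abs_sin_nat_mul_le n (π * x)

/-- The `n`-th term of `exp a * pKilled t x y / 2` for `a = π² t / 2`, i.e. of mode `n + 1`. -/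
noncomputable def modeTerm (a x y : ℝ) (n : ℕ) : ℝ :=
  exp (-a * (((n : ℝ) + 1) ^ 2 - 1)) *
    sin (π * ((n : ℝ) + 1) * x) * sin (π * ((n : ℝ) + 1) * y)

noncomputable def modeWeight (a : ℝ) (n : ℕ) : ℝ :=
  ((n : ℝ) + 1) ^ 2 * exp (-a * (((n : ℝ) + 1) ^ 2 - 1))

lemma modeWeight_nonneg (a : ℝ) (n : ℕ) : 0 ≤ modeWeight a n := by
  rw [modeWeight]; positivity

lemma modeTerm_zero (a x y : ℝ) : modeTerm a x y 0 = sin (π * x) * sin (π * y) := by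
  simp [modeTerm]

lemma abs_modeTerm_le (a : ℝ) {x y : ℝ} (hx : x ∈ Icc (0 : ℝ) 1) (hy : y ∈ Icc (0 : ℝ) 1)
    (n : ℕ) : |modeTerm a x y n| ≤ modeWeight a n * (sin (π * x) * sin (π * y)) := by
  have hsx : |sin (π * ((n : ℝ) + 1) * x)| ≤ ((n : ℝ) + 1) * sin (π * x) := by
    exact_mod_cast abs_sin_pi_mul_nat_mul_le (n + 1) hx
  have hsy : |sin (π * ((n : ℝ) + 1) * y)| ≤ ((n : ℝ) + 1) * sin (π * y) := by
    exact_mod_cast abs_sin_pi_mul_nat_mul_le (n + 1) hy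
  calc |modeTerm a x y n|
      = exp (-a * (((n : ℝ) + 1) ^ 2 - 1)) *
          |sin (π * ((n : ℝ) + 1) * x)| * |sin (π * ((n : ℝ) + 1) * y)| := by
        simp only [modeTerm, abs_mul, abs_exp]
    _ ≤ exp (-a * (((n : ℝ) + 1) ^ 2 - 1)) *
          (((n : ℝ) + 1) * sin (π * x)) * (((n : ℝ) + 1) * sin (π * y)) := by
        have := sin_pi_mul_nonneg hx
        gcongr
    _ = modeWeight a n * (sin (π * x) * sin (π * y)) := by
        rw [modeWeight]; ring

lemma summable_modeWeight {a : ℝ} (ha : 0 < a) : Summable (modeWeight a) := by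
  have hshift :
      Summable fun n : ℕ ↦ exp a * (((n + 1 : ℕ) : ℝ) ^ 2 * exp (-a * (n + 1 : ℕ))) :=
    ((summable_nat_add_iff 1).2 (summable_pow_mul_exp_neg_nat_mul 2 ha)).mul_left _
  refine hshift.of_nonneg_of_le (fun n ↦ modeWeight_nonneg a n) fun n ↦ ?_
  rw [modeWeight, mul_left_comm, ← exp_add]
  push_cast
  gcongr
  nlinarith [sq_nonneg (n : ℝ)]

lemma exp_mul_pKilled (t x y : ℝ) :
    exp (π ^ 2 * t / 2) * pKilled t x y = 2 * ∑' n, modeTerm (π ^ 2 * t / 2) x y n := by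
  rw [pKilled, mul_left_comm, ← tsum_mul_left]
  congr 2 with n
  rw [modeTerm, ← mul_assoc, ← mul_assoc, ← exp_add]
  ring_nf

lemma Eerr_eq (t : ℝ) : Eerr t = π ^ 2 * ∑' n, modeWeight (π ^ 2 * t / 2) (n + 1) := by
  rw [Eerr]
  congr 2 with n
  rw [modeWeight]
  push_cast
  ring_nf

/-- For all `x, y ∈ [0,1]` and `t > 0`:
`|exp(π² t/2) p_t(x,y) − 2 sin(πx) sin(πy)| ≤ E_t · 2 sin(πx) sin(πy)`. -/
theorem abs_pKilled_sub_le (t : ℝ) (ht : 0 < t) (x y : ℝ)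
    (hx : x ∈ Set.Icc (0 : ℝ) 1) (hy : y ∈ Set.Icc (0 : ℝ) 1) :
    |Real.exp (π ^ 2 * t / 2) * pKilled t x y - 2 * Real.sin (π * x) * Real.sin (π * y)| ≤
      Eerr t * (2 * Real.sin (π * x) * Real.sin (π * y)) := by
  set a := π ^ 2 * t / 2
  have hsum := summable_modeWeight (a := a) (by positivity)
  have hbound := abs_modeTerm_le a hx hy
  have hs : 0 ≤ sin (π * x) * sin (π * y) :=
    mul_nonneg (sin_pi_mul_nonneg hx) (sin_pi_mul_nonneg hy)
  have hsplit : exp a * pKilled t x y - 2 * sin (π * x) * sin (π * y) =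
      2 * ∑' n, modeTerm a x y (n + 1) := by
    rw [exp_mul_pKilled, (hsum.mul_right _).of_norm_bounded hbound |>.tsum_eq_zero_add,
      modeTerm_zero]
    ring
  have htail : |∑' n, modeTerm a x y (n + 1)| ≤
      (∑' n, modeWeight a (n + 1)) * (sin (π * x) * sin (π * y)) :=
    tsum_of_norm_bounded (f := fun n ↦ modeTerm a x y (n + 1))
      (((summable_nat_add_iff 1).2 hsum).hasSum.mul_right _) (hbound <| · + 1)
  have hweight : 0 ≤ ∑' n, modeWeight a (n + 1) :=
    tsum_nonneg fun n ↦ modeWeight_nonneg a (n + 1)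
  have hpi : 1 ≤ π ^ 2 := one_le_pow₀ (by linarith [pi_gt_three])
  rw [hsplit, Eerr_eq, abs_mul, abs_two]
  nlinarith [mul_nonneg hweight hs]
end

section
/- Let Z be a point process on ℝ that is superposable: for all α, β ∈ ℝ with e^α + e^β = 1, Z is equal in law to T_α Z + T_β Z', where Z' is an independent copy of Z and T_x is translation by x. Define the cumulant K(f) = −log E[exp(−∫ f dZ)] for measurable f : ℝ → [0,∞). Then K(f(· + x)) = e^x K(f) for all x ∈ ℝ. -/
open Real MeasureTheory ENNReal

/-- The Laplace functional `L(f) = E[exp(−⟨Z, f⟩)]` of a random measure `Z`, with the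
convention `exp(−∞) = 0` when `⟨Z(ω), f⟩ = ∞`. -/
noncomputable def laplaceFunctional {Ω : Type*} [MeasurableSpace Ω] (P : Measure Ω)
    (Z : Ω → Measure ℝ) (f : ℝ → ℝ) : ℝ :=
  ∫ ω, (if (∫⁻ y, ENNReal.ofReal (f y) ∂(Z ω)) = ⊤ then 0
        else Real.exp (-(∫⁻ y, ENNReal.ofReal (f y) ∂(Z ω)).toReal)) ∂P

/-- The cumulant `K(f) = −log E[exp(−⟨Z, f⟩)] ∈ [0,∞]` of a random measure `Z`. -/
noncomputable def cumulant {Ω : Type*} [MeasurableSpace Ω] (P : Measure Ω)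
    (Z : Ω → Measure ℝ) (f : ℝ → ℝ) : ℝ≥0∞ :=
  if laplaceFunctional P Z f = 0 then ⊤
  else ENNReal.ofReal (-Real.log (laplaceFunctional P Z f))

/-!
Superposability makes the Laplace functional multiplicative, `L(f) = L(f(·+α)) L(f(·+β))`
whenever `e^α + e^β = 1`, so the cumulant is additive there. Hence `F(t) = K(f(· + log t))`
satisfies `F(a + b) = F(a) + F(b)` for `a, b > 0`. Being `[0, ∞]`-valued, `F` is monotone, and a
monotone additive function is linear: `F(t) = t F(1)`, which at `t = e^x` is the claim.
-/

open Filter Topology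

noncomputable def expNeg (a : ℝ≥0∞) : ℝ := if a = ⊤ then 0 else Real.exp (-a.toReal)

theorem expNeg_nonneg (a : ℝ≥0∞) : 0 ≤ expNeg a := by
  unfold expNeg; split_ifs <;> positivity

theorem expNeg_le_one (a : ℝ≥0∞) : expNeg a ≤ 1 := by
  unfold expNeg; split_ifs
  · exact zero_le_one
  · exact Real.exp_le_one_iff.2 (neg_nonpos.2 ENNReal.toReal_nonneg)

theorem expNeg_add (a b : ℝ≥0∞) : expNeg (a + b) = expNeg a * expNeg b := by
  rcases eq_or_ne a ⊤ with rfl | ha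
  · simp [expNeg]
  rcases eq_or_ne b ⊤ with rfl | hb
  · simp [expNeg]
  simp only [expNeg, ENNReal.add_eq_top, ha, hb, or_self, if_false,
    ENNReal.toReal_add ha hb, neg_add, Real.exp_add]

theorem measurable_expNeg : Measurable expNeg :=
  Measurable.ite measurableSet_eq measurable_const
    (Real.measurable_exp.comp ENNReal.measurable_toReal.neg)

theorem measurable_expNeg_lintegral {α : Type*} [MeasurableSpace α] {f : α → ℝ}
    (hf : Measurable f) :
    Measurable fun μ : Measure α => expNeg (∫⁻ y, ENNReal.ofReal (f y) ∂μ) :=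
  measurable_expNeg.comp (Measure.measurable_lintegral hf.ennreal_ofReal)

section LaplaceFunctional

variable {Ω : Type*} [MeasurableSpace Ω] {P : Measure Ω} {Z : Ω → Measure ℝ} {f : ℝ → ℝ}

theorem laplaceFunctional_def :
    laplaceFunctional P Z f = ∫ ω, expNeg (∫⁻ y, ENNReal.ofReal (f y) ∂(Z ω)) ∂P := rfl

theorem laplaceFunctional_nonneg : 0 ≤ laplaceFunctional P Z f :=
  integral_nonneg fun _ => expNeg_nonneg _

theorem laplaceFunctional_le_one [IsProbabilityMeasure P] (hZ : Measurable Z)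
    (hf : Measurable f) : laplaceFunctional P Z f ≤ 1 := by
  have hint : Integrable (fun ω => expNeg (∫⁻ y, ENNReal.ofReal (f y) ∂(Z ω))) P :=
    (integrable_const 1).mono' ((measurable_expNeg_lintegral hf).comp hZ).aestronglyMeasurable
      (ae_of_all _ fun _ => by
        rw [Real.norm_of_nonneg (expNeg_nonneg _)]; exact expNeg_le_one _)
  calc laplaceFunctional P Z f ≤ ∫ _, (1 : ℝ) ∂P :=
        integral_mono hint (integrable_const 1) fun _ => expNeg_le_one _
    _ = 1 := by simp

theorem laplaceFunctional_congr_map {Ω' : Type*} [MeasurableSpace Ω'] {P' : Measure Ω'}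
    {Z' : Ω' → Measure ℝ} (hZ : Measurable Z) (hZ' : Measurable Z')
    (hlaw : Measure.map Z P = Measure.map Z' P') (hf : Measurable f) :
    laplaceFunctional P Z f = laplaceFunctional P' Z' f := by
  simp only [laplaceFunctional_def]
  rw [← integral_map hZ.aemeasurable (measurable_expNeg_lintegral hf).aestronglyMeasurable,
    hlaw, integral_map hZ'.aemeasurable (measurable_expNeg_lintegral hf).aestronglyMeasurable]

theorem laplaceFunctional_map_add_map {Z' : Ω → Measure ℝ} (hZ : Measurable Z)
    (hZ' : Measurable Z') (hindep : ProbabilityTheory.IndepFun Z Z' P) {T S : ℝ → ℝ}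
    (hT : Measurable T) (hS : Measurable S) (hf : Measurable f) :
    laplaceFunctional P (fun ω => Measure.map T (Z ω) + Measure.map S (Z' ω)) f
      = laplaceFunctional P Z (fun y => f (T y)) * laplaceFunctional P Z' (fun y => f (S y)) := by
  have hfT := measurable_expNeg_lintegral (hf.comp hT)
  have hfS := measurable_expNeg_lintegral (hf.comp hS)
  simp only [laplaceFunctional_def]
  simp_rw [lintegral_add_measure, lintegral_map hf.ennreal_ofReal hT,
    lintegral_map hf.ennreal_ofReal hS, expNeg_add]
  exact (hindep.comp hfT hfS).integral_fun_mul_eq_mul_integral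
    (hfT.comp hZ).aestronglyMeasurable (hfS.comp hZ').aestronglyMeasurable

end LaplaceFunctional

section AdditiveOnPos

variable {F : ℝ → ℝ≥0∞}

theorem monotoneOn_Ioi_of_map_add (hF : ∀ a b : ℝ, 0 < a → 0 < b → F (a + b) = F a + F b) :
    MonotoneOn F (Set.Ioi 0) := by
  intro s hs t _ hst
  rcases hst.eq_or_lt with rfl | hlt
  · rfl
  · calc F s ≤ F s + F (t - s) := le_self_add
      _ = F t := by rw [← hF s (t - s) hs (sub_pos.2 hlt), add_sub_cancel]

theorem map_natCast_mul_of_map_add (hF : ∀ a b : ℝ, 0 < a → 0 < b → F (a + b) = F a + F b)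
    {t : ℝ} (ht : 0 < t) {n : ℕ} (hn : 0 < n) : F (n * t) = n * F t := by
  induction n with
  | zero => exact absurd hn (lt_irrefl 0)
  | succ k ih =>
    rcases k.eq_zero_or_pos with rfl | hk
    · simp
    · rw [Nat.cast_succ, add_mul, one_mul, hF _ t (by positivity) ht, ih hk]
      push_cast
      ring

theorem ofReal_natCast_div_mul (m : ℕ) {n : ℕ} (hn : 0 < n) (c : ℝ≥0∞) :
    ENNReal.ofReal (m / n) * c = m * c / n := by
  rw [ENNReal.ofReal_div_of_pos (by exact_mod_cast hn), ofReal_natCast, ofReal_natCast,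
    ENNReal.mul_div_right_comm]

/-- `n F(t) = F(nt)` lies between `F ⌊nt⌋₊ = ⌊nt⌋₊ F(1)` and `F ⌈nt⌉₊ = ⌈nt⌉₊ F(1)`. -/
theorem eq_ofReal_mul_of_map_add (hF : ∀ a b : ℝ, 0 < a → 0 < b → F (a + b) = F a + F b)
    {t : ℝ} (ht : 0 < t) : F t = ENNReal.ofReal t * F 1 := by
  have hmono := monotoneOn_Ioi_of_map_add hF
  have hnat : ∀ {k : ℕ}, 0 < k → F k = k * F 1 := fun hk => by
    simpa using map_natCast_mul_of_map_add hF one_pos hk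
  have hlim : ∀ g : ℝ → ℕ, Tendsto (fun x : ℝ => (g (t * x) : ℝ) / x) atTop (𝓝 t) →
      Tendsto (fun n : ℕ => ENNReal.ofReal ((g (t * n) : ℝ) / n) * F 1) atTop
        (𝓝 (ENNReal.ofReal t * F 1)) := fun g hg =>
    ENNReal.Tendsto.mul_const
      (ENNReal.tendsto_ofReal (hg.comp tendsto_natCast_atTop_atTop))
      (Or.inl (ENNReal.ofReal_pos.2 ht).ne')
  apply le_antisymm
  · refine ge_of_tendsto (hlim _ (tendsto_nat_ceil_mul_div_atTop ht.le))
      (eventually_atTop.2 ⟨1, fun n hn => ?_⟩)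
    have htn : 0 < t * n := by positivity
    rw [ofReal_natCast_div_mul _ hn, ENNReal.le_div_iff_mul_le (by simp; omega) (by simp),
      mul_comm, ← map_natCast_mul_of_map_add hF ht hn, ← hnat (Nat.ceil_pos.2 htn), mul_comm]
    exact hmono htn (lt_of_lt_of_le htn (Nat.le_ceil _)) (Nat.le_ceil _)
  · refine le_of_tendsto (hlim _ (tendsto_nat_floor_mul_div_atTop ht.le))
      (eventually_atTop.2 ⟨1, fun n hn => ?_⟩)
    have htn : 0 < t * n := by positivity
    rw [ofReal_natCast_div_mul _ hn, ENNReal.div_le_iff (by simp; omega) (by simp),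
      mul_comm (F t), ← map_natCast_mul_of_map_add hF ht hn, mul_comm (n : ℝ)]
    rcases (Nat.floor (t * n)).eq_zero_or_pos with h0 | hpos
    · simp [h0]
    · rw [← hnat hpos]
      exact hmono (show (0 : ℝ) < _ by exact_mod_cast hpos) htn (Nat.floor_le htn.le)

end AdditiveOnPos

noncomputable def negLog (x : ℝ) : ℝ≥0∞ := if x = 0 then ⊤ else ENNReal.ofReal (-Real.log x)

theorem negLog_mul {a b : ℝ} (ha₀ : 0 ≤ a) (ha₁ : a ≤ 1) (hb₀ : 0 ≤ b) (hb₁ : b ≤ 1) :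
    negLog (a * b) = negLog a + negLog b := by
  rcases ha₀.eq_or_lt with rfl | ha
  · simp [negLog]
  rcases hb₀.eq_or_lt with rfl | hb
  · simp [negLog]
  simp only [negLog, mul_ne_zero ha.ne' hb.ne', ha.ne', hb.ne', if_false,
    Real.log_mul ha.ne' hb.ne', neg_add]
  exact ENNReal.ofReal_add (neg_nonneg.2 (Real.log_nonpos ha₀ ha₁))
    (neg_nonneg.2 (Real.log_nonpos hb₀ hb₁))

section Cumulant

variable {Ω : Type*} [MeasurableSpace Ω] {P : Measure Ω} {Z : Ω → Measure ℝ} {f : ℝ → ℝ}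

theorem cumulant_eq_negLog : cumulant P Z f = negLog (laplaceFunctional P Z f) := rfl

theorem cumulant_eq_add_of_map_eq [IsProbabilityMeasure P] {Z' : Ω → Measure ℝ}
    (hZ : Measurable Z) (hZ' : Measurable Z') (hid : Measure.map Z P = Measure.map Z' P)
    (hindep : ProbabilityTheory.IndepFun Z Z' P) {T S : ℝ → ℝ} (hT : Measurable T)
    (hS : Measurable S)
    (hsup : Measure.map (fun ω => Measure.map T (Z ω) + Measure.map S (Z' ω)) P
      = Measure.map Z P)
    (hf : Measurable f) :
    cumulant P Z f = cumulant P Z (fun y => f (T y)) + cumulant P Z (fun y => f (S y)) := by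
  have hW : Measurable fun ω => Measure.map T (Z ω) + Measure.map S (Z' ω) :=
    ((Measure.measurable_map T hT).comp hZ).add ((Measure.measurable_map S hS).comp hZ')
  have hL : laplaceFunctional P Z f
      = laplaceFunctional P Z (fun y => f (T y)) * laplaceFunctional P Z (fun y => f (S y)) := by
    rw [← laplaceFunctional_congr_map hW hZ hsup hf,
      laplaceFunctional_map_add_map hZ hZ' hindep hT hS hf,
      laplaceFunctional_congr_map (f := fun y => f (S y)) hZ' hZ hid.symm (hf.comp hS)]
  rw [cumulant_eq_negLog, hL]
  exact negLog_mul laplaceFunctional_nonneg (laplaceFunctional_le_one hZ (hf.comp hT))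
    laplaceFunctional_nonneg (laplaceFunctional_le_one hZ (hf.comp hS))

end Cumulant

/-- Let `Z` be a point process on `ℝ` which is superposable: for all `α, β` with
`e^α + e^β = 1`, `Z` is equal in law to `T_α Z + T_β Z'`, where `Z'` is an independent copy of
`Z` and `T_x` is translation by `x`.  Then the cumulant satisfies
`K(f(· + x)) = e^x K(f)` for all `x ∈ ℝ` and measurable `f ≥ 0`. -/
theorem cumulant_superposable {Ω : Type*} [MeasurableSpace Ω] (P : Measure Ω)
    [IsProbabilityMeasure P] (Z Z' : Ω → Measure ℝ)
    (hZ : Measurable Z) (hZ' : Measurable Z')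
    (hid : Measure.map Z P = Measure.map Z' P)
    (hindep : ProbabilityTheory.IndepFun Z Z' P)
    (hsup : ∀ α β : ℝ, Real.exp α + Real.exp β = 1 →
      Measure.map (fun ω => Measure.map (fun y => y + α) (Z ω)
        + Measure.map (fun y => y + β) (Z' ω)) P = Measure.map Z P) :
    ∀ f : ℝ → ℝ, Measurable f → (∀ y, 0 ≤ f y) → ∀ x : ℝ,
      cumulant P Z (fun y => f (y + x)) = ENNReal.ofReal (Real.exp x) * cumulant P Z f := by
  intro f hf _ x
  set F : ℝ → ℝ≥0∞ := fun t => cumulant P Z (fun y => f (y + Real.log t)) with hF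
  have hadd : ∀ a b : ℝ, 0 < a → 0 < b → F (a + b) = F a + F b := by
    intro a b ha hb
    have hab : 0 < a + b := add_pos ha hb
    have hexp : Real.exp (Real.log a - Real.log (a + b))
        + Real.exp (Real.log b - Real.log (a + b)) = 1 := by
      rw [Real.exp_sub, Real.exp_sub, Real.exp_log ha, Real.exp_log hb, Real.exp_log hab]
      field_simp
    have hsplit := cumulant_eq_add_of_map_eq (f := fun y => f (y + Real.log (a + b))) hZ hZ' hid
      hindep (measurable_add_const _) (measurable_add_const _) (hsup _ _ hexp)
      (hf.comp (measurable_add_const _))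
    simpa only [hF, add_assoc, sub_add_cancel] using hsplit
  simpa [hF] using eq_ofReal_mul_of_map_add hadd (Real.exp_pos x)
end

section
/- Let λ be a boundedly finite measure on ℝ satisfying T_x λ = e^x λ for all x ∈ ℝ, where T_x λ is the pushforward of λ by translation by x. Then there exists a constant c ≥ 0 such that λ(dx) = c e^{-x} dx. -/
open Real MeasureTheory ENNReal

/-! Weighting `λ` by `e^y` turns the relation `T_x λ = e^x λ` into translation invariance, and
`λ` being boundedly finite makes the weighted measure finite on compacts. By uniqueness of Haar
measure it is then `c • volume`, so `λ = c e^{-y} dy`. -/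

theorem MeasurableEquiv.map_withDensity {α β : Type*} [MeasurableSpace α] [MeasurableSpace β]
    (e : α ≃ᵐ β) (μ : Measure α) (f : α → ℝ≥0∞) :
    (μ.withDensity f).map e = (μ.map e).withDensity (f ∘ e.symm) := by
  ext s hs
  rw [Measure.map_apply e.measurable hs, withDensity_apply _ (e.measurable hs),
    withDensity_apply _ hs, e.restrict_map, lintegral_map_equiv]
  simp

theorem isAddLeftInvariant_withDensity_exp {μ : Measure ℝ}
    (hμ : ∀ x : ℝ, μ.map (· + x) = ENNReal.ofReal (exp x) • μ) :
    (μ.withDensity fun y => ENNReal.ofReal (exp y)).IsAddLeftInvariant := by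
  refine ⟨fun x => ?_⟩
  have hdens : ENNReal.ofReal (exp x) • (fun y => ENNReal.ofReal (exp (y - x)))
      = fun y => ENNReal.ofReal (exp y) := by
    ext y
    simp [← ENNReal.ofReal_mul (exp_nonneg x), ← exp_add]
  calc (μ.withDensity fun y => ENNReal.ofReal (exp y)).map (x + ·)
      = (μ.withDensity fun y => ENNReal.ofReal (exp y)).map (MeasurableEquiv.addLeft x) := rfl
    _ = (μ.map (· + x)).withDensity fun y => ENNReal.ofReal (exp (y - x)) := by
      rw [MeasurableEquiv.map_withDensity]
      congr 1
      · simp_rw [MeasurableEquiv.coe_addLeft, add_comm x]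
      · ext y
        simp [sub_eq_neg_add]
    _ = μ.withDensity fun y => ENNReal.ofReal (exp y) := by
      rw [hμ, withDensity_smul_measure, ← withDensity_smul _ (by fun_prop), hdens]

/-- Let `λ` be a boundedly finite measure on `ℝ` satisfying `T_x λ = e^x λ` for all `x ∈ ℝ`,
where `T_x λ` is the pushforward of `λ` under translation by `x` (so that
`λ(A − x) = e^x λ(A)`).  Then there exists a constant `c ≥ 0` with `λ(dx) = c e^{-x} dx`. -/
theorem translation_exponential_measure (lam : Measure ℝ)
    (hfin : ∀ A : Set ℝ, MeasurableSet A → Bornology.IsBounded A → lam A < ⊤)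
    (htrans : ∀ x : ℝ, Measure.map (fun y => y + x) lam = ENNReal.ofReal (Real.exp x) • lam) :
    ∃ c : ℝ, 0 ≤ c ∧
      lam = volume.withDensity (fun y => ENNReal.ofReal (c * Real.exp (-y))) := by
  set μ := lam.withDensity fun y => ENNReal.ofReal (exp y)
  have : IsFiniteMeasureOnCompacts lam := ⟨fun K hK => hfin K hK.measurableSet hK.isBounded⟩
  have : IsFiniteMeasureOnCompacts μ :=
    have := IsLocallyFiniteMeasure.withDensity_ofReal (μ := lam) continuous_exp
    inferInstance
  have : μ.IsAddLeftInvariant := isAddLeftInvariant_withDensity_exp htrans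
  set c := μ.addHaarScalarFactor volume
  refine ⟨c, c.coe_nonneg, ?_⟩
  have hlam : lam = μ.withDensity fun y => ENNReal.ofReal (exp (-y)) := by
    rw [← withDensity_mul _ (by fun_prop) (by fun_prop)]
    convert (withDensity_one (μ := lam)).symm
    ext y
    simp [← ENNReal.ofReal_mul (exp_nonneg y), ← exp_add]
  rw [hlam, Measure.isAddLeftInvariant_eq_smul μ volume]
  change ((c : ℝ≥0∞) • volume).withDensity _ = _
  rw [withDensity_smul_measure, ← withDensity_smul _ (by fun_prop)]
  congr 1
  ext y
  simp [ENNReal.ofReal_mul c.coe_nonneg]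
end

section
/- Let W be a nonnegative random variable whose Laplace transform χ(λ) = E[e^{-λW}] satisfies χ''(λ) ∼ 1/λ as λ → 0+. Then V_2(x) := E[W² 1_{W ≤ x}] ∼ x as x → ∞, and consequently P(W > x) ∼ 1/x as x → ∞. -/
open Real MeasureTheory Filter Topology Set ProbabilityTheory

/-!
`χ''(λ) = E[W² e^{-λW}]` is the Laplace transform of the measure `ν = W² · P`, so the hypothesis
says `λ ∫ e^{-λW} dν → 1`. Karamata's argument upgrades this: it holds with `e^{-λW}` replaced by
`e^{-λW} φ(e^{-λW})` and `1` by `∫₀¹ φ`, first for monomials `φ(s) = sⁿ` (a rescaling of `λ`), then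
for polynomials and, by Weierstrass approximation, for every continuous `φ`. Since
`1_{W ≤ 1/λ} = s · s⁻¹ 1_{s ≥ e⁻¹}` at `s = e^{-λW}`, squeezing `s⁻¹ 1_{s ≥ e⁻¹}` between continuous
functions gives `λ ν{W ≤ 1/λ} → 1`, i.e. `V₂(x) ∼ x`.

For the tail, `W²` lies between `y²` and `c²y²` on `{y < W ≤ cy}`, so `V₂(x) ∼ x` bounds
`P(y < W ≤ cy)` by multiples of `1 / y`; summing over the blocks `y = cᵏx` (a geometric series)
puts `x P(W > x)` between `(1 - 2η - η²)/(1 + η)` and `(1 + η)³` for `c = 1 + η`.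
-/

theorem tendsto_of_eventually_bounds {α : Type*} {l : Filter α} {g : α → ℝ} {lo up : ℝ → ℝ}
    {L : ℝ} (hlo : Tendsto lo (𝓝[>] 0) (𝓝 L)) (hup : Tendsto up (𝓝[>] 0) (𝓝 L))
    (hg_lo : ∀ᶠ η in 𝓝[>] 0, ∀ b < lo η, ∀ᶠ x in l, b < g x)
    (hg_up : ∀ᶠ η in 𝓝[>] 0, ∀ b > up η, ∀ᶠ x in l, g x < b) :
    Tendsto g l (𝓝 L) := by
  refine tendsto_order.2 ⟨fun b hb => ?_, fun b hb => ?_⟩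
  · obtain ⟨η, hη, hbη⟩ := (hg_lo.and (hlo.eventually_const_lt hb)).exists
    exact hη b hbη
  · obtain ⟨η, hη, hbη⟩ := (hg_up.and (hup.eventually_lt_const hb)).exists
    exact hη b hbη

theorem exp_neg_mul_mem_Ioc {l x : ℝ} (hl : 0 ≤ l) (hx : 0 ≤ x) : exp (-l * x) ∈ Ioc 0 1 :=
  ⟨exp_pos _, exp_le_one_iff.2 (by nlinarith)⟩

theorem exp_neg_one_le_exp_neg_mul_iff {l x : ℝ} (hl : 0 < l) :
    exp (-1) ≤ exp (-l * x) ↔ x ≤ l⁻¹ := by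
  rw [exp_le_exp, neg_mul, neg_le_neg_iff, ← le_inv_mul_iff₀ hl, mul_one]

/-- For `0 < p < q`, a continuous function between `s ↦ s⁻¹ 1_{s ≥ q}` and `s ↦ s⁻¹ 1_{s > p}`. -/
noncomputable def invRamp (p q s : ℝ) : ℝ :=
  min 1 (max 0 ((s - p) / (q - p))) / max s p

section InvRamp

variable {p q s : ℝ}

theorem continuous_invRamp (hp : 0 < p) : Continuous (invRamp p q) :=
  (continuous_const.min
      (continuous_const.max ((continuous_id.sub continuous_const).div_const _))).div
    (continuous_id.max continuous_const) fun _ => (lt_max_of_lt_right hp).ne'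

theorem invRamp_nonneg (hp : 0 ≤ p) (s : ℝ) : 0 ≤ invRamp p q s :=
  div_nonneg (le_min zero_le_one (le_max_left _ _)) (hp.trans (le_max_right _ _))

theorem invRamp_le_inv (hs : 0 < s) : invRamp p q s ≤ s⁻¹ :=
  (div_le_div₀ zero_le_one (min_le_left _ _) hs (le_max_left _ _)).trans_eq (one_div s)

theorem invRamp_of_le (hpq : p < q) (hs : s ≤ p) : invRamp p q s = 0 := by
  have : (s - p) / (q - p) ≤ 0 := div_nonpos_of_nonpos_of_nonneg (by linarith) (by linarith)
  simp [invRamp, max_eq_left this]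

theorem invRamp_of_ge (hpq : p < q) (hs : q ≤ s) : invRamp p q s = s⁻¹ := by
  have : 1 ≤ (s - p) / (q - p) := (one_le_div (by linarith)).2 (by linarith)
  simp [invRamp, min_eq_left (le_max_of_le_right this), max_eq_left (hpq.le.trans hs)]

theorem neg_log_le_integral_invRamp (hp : 0 < p) (hpq : p < q) (hq : q ≤ 1) :
    -log q ≤ ∫ s in 0..1, invRamp p q s := by
  have hq0 : 0 < q := hp.trans hpq
  have hcont := continuous_invRamp (q := q) hp
  rw [← intervalIntegral.integral_add_adjacent_intervals (b := q) (hcont.intervalIntegrable _ _)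
    (hcont.intervalIntegrable _ _)]
  have htail : ∫ s in q..1, invRamp p q s = -log q := by
    rw [intervalIntegral.integral_congr fun s hs => invRamp_of_ge hpq (uIcc_of_le hq ▸ hs).1,
      integral_inv_of_pos hq0 one_pos, one_div, log_inv]
  rw [htail, le_add_iff_nonneg_left]
  exact intervalIntegral.integral_nonneg hq0.le fun s _ => invRamp_nonneg hp.le s

theorem integral_invRamp_le_neg_log (hp : 0 < p) (hpq : p < q) (hp1 : p ≤ 1) :
    ∫ s in 0..1, invRamp p q s ≤ -log p := by
  have hcont := continuous_invRamp (q := q) hp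
  rw [← intervalIntegral.integral_add_adjacent_intervals (b := p) (hcont.intervalIntegrable _ _)
    (hcont.intervalIntegrable _ _)]
  have hhead : ∫ s in 0..p, invRamp p q s = 0 := by
    rw [intervalIntegral.integral_congr (g := fun _ => 0)
      fun s hs => invRamp_of_le hpq (uIcc_of_le hp.le ▸ hs).2, intervalIntegral.integral_zero]
  have hinv : IntervalIntegrable (fun s => s⁻¹) volume p 1 :=
    intervalIntegral.intervalIntegrable_inv
      (fun s hs => (hp.trans_le (uIcc_of_le hp1 ▸ hs).1).ne') continuousOn_id
  calc (∫ s in 0..p, invRamp p q s) + ∫ s in p..1, invRamp p q s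
      ≤ 0 + ∫ s in p..1, s⁻¹ := by
        rw [hhead]
        gcongr
        exact intervalIntegral.integral_mono_on hp1 (hcont.intervalIntegrable _ _) hinv
          fun s hs => invRamp_le_inv (hp.trans_le hs.1)
    _ = -log p := by rw [zero_add, integral_inv_of_pos hp one_pos, one_div, log_inv]

end InvRamp

section Karamata

variable {Ω : Type*} [MeasurableSpace Ω] {ν : Measure Ω} {X : Ω → ℝ}

theorem integrable_exp_mul_comp (hX0 : ∀ ω, 0 ≤ X ω) {l : ℝ} (hl : 0 ≤ l)
    (hint : Integrable (fun ω => exp (-l * X ω)) ν) {φ : ℝ → ℝ} (hφ : Continuous φ) :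
    Integrable (fun ω => exp (-l * X ω) * φ (exp (-l * X ω))) ν := by
  obtain ⟨C, hC⟩ := isCompact_Icc.exists_bound_of_continuousOn (hφ.continuousOn (s := Icc 0 1))
  exact hint.mul_bdd (hφ.comp_aestronglyMeasurable hint.aestronglyMeasurable)
    (.of_forall fun ω => hC _ (Ioc_subset_Icc_self (exp_neg_mul_mem_Ioc hl (hX0 ω))))

theorem abs_integral_exp_mul_sub_le (hX0 : ∀ ω, 0 ≤ X ω) {l : ℝ} (hl : 0 ≤ l)
    (hint : Integrable (fun ω => exp (-l * X ω)) ν) {φ ψ : ℝ → ℝ} (hφ : Continuous φ)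
    (hψ : Continuous ψ) {ε : ℝ} (hφψ : ∀ s ∈ Icc (0 : ℝ) 1, |φ s - ψ s| ≤ ε) :
    |∫ ω, exp (-l * X ω) * φ (exp (-l * X ω)) ∂ν - ∫ ω, exp (-l * X ω) * ψ (exp (-l * X ω)) ∂ν|
      ≤ ε * ∫ ω, exp (-l * X ω) ∂ν := by
  rw [← integral_sub (integrable_exp_mul_comp hX0 hl hint hφ)
    (integrable_exp_mul_comp hX0 hl hint hψ), ← integral_const_mul ε (fun ω => exp (-l * X ω)),
    ← Real.norm_eq_abs]
  refine norm_integral_le_of_norm_le (hint.const_mul ε) (.of_forall fun ω => ?_)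
  have hs := exp_neg_mul_mem_Ioc hl (hX0 ω)
  rw [← mul_sub, norm_mul, norm_of_nonneg hs.1.le, mul_comm ε]
  exact mul_le_mul_of_nonneg_left (hφψ _ (Ioc_subset_Icc_self hs)) hs.1.le

theorem tendsto_mul_integral_exp_const_mul
    (hL : Tendsto (fun l => l * ∫ ω, exp (-l * X ω) ∂ν) (𝓝[>] 0) (𝓝 1)) {c : ℝ} (hc : 0 < c) :
    Tendsto (fun l => l * ∫ ω, exp (-(c * l) * X ω) ∂ν) (𝓝[>] 0) (𝓝 c⁻¹) := by
  have hscale : Tendsto (c * ·) (𝓝[>] (0 : ℝ)) (𝓝[>] 0) :=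
    tendsto_comap.mono_left (comap_mulLeft_nhdsGT_zero hc).ge
  have := (hL.comp hscale).const_mul c⁻¹
  rw [mul_one] at this
  refine this.congr fun l => ?_
  simp only [Function.comp_apply]
  field_simp

theorem integrable_indicator_le_inv (hX : Measurable X) {l : ℝ} (hl : 0 < l)
    (hint_l : Integrable (fun ω => exp (-l * X ω)) ν) :
    Integrable ({ω | X ω ≤ l⁻¹}.indicator (1 : Ω → ℝ)) ν := by
  refine (hint_l.const_mul (exp 1)).mono'
    ((measurable_one.indicator (measurableSet_le hX measurable_const)).aestronglyMeasurable)
    (.of_forall fun ω => ?_)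
  by_cases h : X ω ≤ l⁻¹
  · rw [indicator_of_mem (s := {ω | X ω ≤ l⁻¹}) h, Pi.one_apply, norm_one, ← exp_add,
      one_le_exp_iff]
    nlinarith [mul_inv_cancel₀ hl.ne']
  · rw [indicator_of_notMem (s := {ω | X ω ≤ l⁻¹}) h, norm_zero]
    positivity

theorem integral_exp_mul_invRamp_le_measureReal (hX0 : ∀ ω, 0 ≤ X ω) (hX : Measurable X)
    {l : ℝ} (hl : 0 < l) (hint_l : Integrable (fun ω => exp (-l * X ω)) ν) {q : ℝ}
    (hq : exp (-1) < q) :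
    ∫ ω, exp (-l * X ω) * invRamp (exp (-1)) q (exp (-l * X ω)) ∂ν
      ≤ ν.real {ω | X ω ≤ l⁻¹} := by
  rw [← integral_indicator_one (measurableSet_le hX measurable_const)]
  refine integral_mono (integrable_exp_mul_comp hX0 hl.le hint_l (continuous_invRamp (exp_pos _)))
    (integrable_indicator_le_inv hX hl hint_l) fun ω => ?_
  have hs := exp_pos (-l * X ω)
  by_cases h : X ω ≤ l⁻¹
  · rw [indicator_of_mem (s := {ω | X ω ≤ l⁻¹}) h, Pi.one_apply, ← mul_inv_cancel₀ hs.ne']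
    exact mul_le_mul_of_nonneg_left (invRamp_le_inv hs) hs.le
  · rw [indicator_of_notMem (s := {ω | X ω ≤ l⁻¹}) h, invRamp_of_le hq
      (not_le.1 ((exp_neg_one_le_exp_neg_mul_iff hl).not.2 h)).le, mul_zero]

theorem measureReal_le_integral_exp_mul_invRamp (hX0 : ∀ ω, 0 ≤ X ω) (hX : Measurable X)
    {l : ℝ} (hl : 0 < l) (hint_l : Integrable (fun ω => exp (-l * X ω)) ν) {p : ℝ}
    (hp : 0 < p) (hp1 : p < exp (-1)) :
    ν.real {ω | X ω ≤ l⁻¹}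
      ≤ ∫ ω, exp (-l * X ω) * invRamp p (exp (-1)) (exp (-l * X ω)) ∂ν := by
  rw [← integral_indicator_one (measurableSet_le hX measurable_const)]
  refine integral_mono (integrable_indicator_le_inv hX hl hint_l)
    (integrable_exp_mul_comp hX0 hl.le hint_l (continuous_invRamp hp)) fun ω => ?_
  have hs := exp_pos (-l * X ω)
  by_cases h : X ω ≤ l⁻¹
  · rw [indicator_of_mem (s := {ω | X ω ≤ l⁻¹}) h, Pi.one_apply,
      invRamp_of_ge hp1 ((exp_neg_one_le_exp_neg_mul_iff hl).2 h), mul_inv_cancel₀ hs.ne']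
  · rw [indicator_of_notMem (s := {ω | X ω ≤ l⁻¹}) h]
    exact mul_nonneg hs.le (invRamp_nonneg hp.le _)

variable (hX0 : ∀ ω, 0 ≤ X ω) (hint : ∀ l > 0, Integrable (fun ω => exp (-l * X ω)) ν)
  (hL : Tendsto (fun l => l * ∫ ω, exp (-l * X ω) ∂ν) (𝓝[>] 0) (𝓝 1))
include hX0 hint hL

theorem tendsto_mul_integral_exp_mul_eval (p : Polynomial ℝ) :
    Tendsto (fun l => l * ∫ ω, exp (-l * X ω) * p.eval (exp (-l * X ω)) ∂ν) (𝓝[>] 0)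
      (𝓝 (∫ s in 0..1, p.eval s)) := by
  induction p using Polynomial.induction_on' with
  | add p q hp hq =>
    simp only [Polynomial.eval_add]
    rw [intervalIntegral.integral_add (p.continuous.intervalIntegrable _ _)
      (q.continuous.intervalIntegrable _ _)]
    refine (hp.add hq).congr' ?_
    filter_upwards [self_mem_nhdsWithin] with l hl
    rw [← mul_add, ← integral_add (integrable_exp_mul_comp hX0 hl.le (hint l hl) p.continuous)
      (integrable_exp_mul_comp hX0 hl.le (hint l hl) q.continuous)]
    simp only [mul_add]
  | monomial n a =>
    have hmono : ∀ l x : ℝ, exp (-l * x) * (a * exp (-l * x) ^ n)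
        = a * exp (-((n + 1 : ℝ) * l) * x) := by
      intro l x
      rw [← exp_nat_mul, mul_left_comm, ← exp_add]
      ring_nf
    simp only [Polynomial.eval_monomial, hmono, integral_const_mul,
      intervalIntegral.integral_const_mul, integral_pow]
    have := (tendsto_mul_integral_exp_const_mul hL (c := n + 1) (by positivity)).const_mul a
    convert this using 2 with l
    · ring
    · simp [div_eq_mul_inv]

theorem tendsto_mul_integral_exp_mul_comp {φ : ℝ → ℝ} (hφ : Continuous φ) :
    Tendsto (fun l => l * ∫ ω, exp (-l * X ω) * φ (exp (-l * X ω)) ∂ν) (𝓝[>] 0)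
      (𝓝 (∫ s in 0..1, φ s)) := by
  refine Metric.tendsto_nhds.2 fun ε hε => ?_
  obtain ⟨p, hp⟩ := exists_polynomial_near_of_continuousOn 0 1 φ hφ.continuousOn (ε / 4)
    (by positivity)
  have hpoly := Metric.tendsto_nhds.1 (tendsto_mul_integral_exp_mul_eval hX0 hint hL p) (ε / 4)
    (by positivity)
  set I := ∫ s in 0..1, p.eval s
  have hI : dist I (∫ s in 0..1, φ s) ≤ ε / 4 := by
    rw [dist_eq_norm, ← intervalIntegral.integral_sub (p.continuous.intervalIntegrable 0 1)
      (hφ.intervalIntegrable 0 1)]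
    refine (intervalIntegral.norm_integral_le_of_norm_le_const (C := ε / 4) fun s hs => ?_).trans_eq
      (by simp)
    exact (hp s (Ioc_subset_Icc_self (uIoc_of_le zero_le_one (α := ℝ) ▸ hs))).le
  filter_upwards [hpoly, hL.eventually_lt_const one_lt_two, self_mem_nhdsWithin]
    with l hl_poly hl_L hl
  set F := l * ∫ ω, exp (-l * X ω) * φ (exp (-l * X ω)) ∂ν
  set G := l * ∫ ω, exp (-l * X ω) * p.eval (exp (-l * X ω)) ∂ν
  have hFG : dist F G ≤ ε / 2 := by
    rw [Real.dist_eq, ← mul_sub, abs_mul, abs_of_pos hl]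
    calc l * |_| ≤ l * (ε / 4 * ∫ ω, exp (-l * X ω) ∂ν) :=
          mul_le_mul_of_nonneg_left (abs_integral_exp_mul_sub_le hX0 hl.le (hint l hl) hφ
            p.continuous fun s hs => (abs_sub_comm _ _).trans_le (hp s hs).le) hl.le
      _ ≤ ε / 2 := by nlinarith
  calc dist F (∫ s in 0..1, φ s) ≤ dist F G + dist G I + dist I (∫ s in 0..1, φ s) :=
        dist_triangle4 _ _ _ _
    _ < ε := by linarith

theorem tendsto_mul_measureReal_le_inv (hX : Measurable X) :
    Tendsto (fun l => l * ν.real {ω | X ω ≤ l⁻¹}) (𝓝[>] 0) (𝓝 1) := by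
  refine tendsto_of_eventually_bounds (lo := (1 - ·)) (up := (1 + ·))
    (by simpa using ((continuous_sub_left (1 : ℝ)).tendsto 0).mono_left nhdsWithin_le_nhds)
    (by simpa using ((continuous_const_add (1 : ℝ)).tendsto 0).mono_left nhdsWithin_le_nhds) ?_ ?_
  · filter_upwards [Ioo_mem_nhdsGT one_pos] with δ hδ b hb
    have hq : exp (-1) < exp (-(1 - δ)) := exp_lt_exp.2 (by linarith [hδ.1])
    have hφ := neg_log_le_integral_invRamp (exp_pos _) hq (exp_le_one_iff.2 (by linarith [hδ.2]))
    rw [log_exp, neg_neg] at hφ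
    filter_upwards [(tendsto_mul_integral_exp_mul_comp hX0 hint hL
      (continuous_invRamp (exp_pos _))).eventually_const_lt (hb.trans_le hφ), self_mem_nhdsWithin]
      with l hlb hl
    exact hlb.trans_le (mul_le_mul_of_nonneg_left
      (integral_exp_mul_invRamp_le_measureReal hX0 hX hl (hint l hl) hq) hl.le)
  · filter_upwards [self_mem_nhdsWithin] with δ hδ b hb
    have hp : exp (-(1 + δ)) < exp (-1) := exp_lt_exp.2 (by linarith [mem_Ioi.1 hδ])
    have hφ := integral_invRamp_le_neg_log (exp_pos _) hp
      (exp_le_one_iff.2 (by linarith [mem_Ioi.1 hδ]))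
    rw [log_exp, neg_neg] at hφ
    filter_upwards [(tendsto_mul_integral_exp_mul_comp hX0 hint hL
      (continuous_invRamp (exp_pos _))).eventually_lt_const (hφ.trans_lt hb), self_mem_nhdsWithin]
      with l hlb hl
    exact (mul_le_mul_of_nonneg_left (measureReal_le_integral_exp_mul_invRamp hX0 hX hl
      (hint l hl) (exp_pos _) hp) hl.le).trans_lt hlb

theorem tendsto_measureReal_le_div_of_tendsto_mul_integral_exp (hX : Measurable X) :
    Tendsto (fun x => ν.real {ω | X ω ≤ x} / x) atTop (𝓝 1) := by
  refine ((tendsto_mul_measureReal_le_inv hX0 hint hL hX).comp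
    tendsto_inv_atTop_nhdsGT_zero).congr' ?_
  filter_upwards [eventually_gt_atTop 0] with x hx
  simp [div_eq_inv_mul]

end Karamata

/-- The truncated second moment `V₂(x) = E[W² 1_{W ≤ x}]`. -/
noncomputable def truncatedSecondMoment {Ω : Type*} [MeasurableSpace Ω] (P : Measure Ω)
    (W : Ω → ℝ) (x : ℝ) : ℝ :=
  ∫ ω in {ω | W ω ≤ x}, W ω ^ 2 ∂P

section Tail

variable {Ω : Type*} [MeasurableSpace Ω] {P : Measure Ω} [IsFiniteMeasure P] {W : Ω → ℝ}

theorem tendsto_measureReal_lt_atTop (hW : Measurable W) :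
    Tendsto (fun x => P.real {ω | x < W ω}) atTop (𝓝 0) := by
  have h := tendsto_measure_iInter_atTop (μ := P) (s := fun x : ℝ => {ω | x < W ω})
    (fun _ => (measurableSet_lt measurable_const hW).nullMeasurableSet)
    (fun _ _ hxy _ hω => hxy.trans_lt hω) ⟨0, measure_ne_top _ _⟩
  have hempty : ⋂ x : ℝ, {ω | x < W ω} = ∅ :=
    eq_empty_of_forall_notMem fun ω hω => lt_irrefl (W ω) (mem_iInter.1 hω (W ω))
  rw [hempty, measure_empty] at h
  exact (ENNReal.tendsto_toReal ENNReal.zero_ne_top).comp h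

theorem integrableOn_sq_le (hW : Measurable W) (hW0 : ∀ ω, 0 ≤ W ω) (x : ℝ) :
    IntegrableOn (fun ω => W ω ^ 2) {ω | W ω ≤ x} P :=
  .of_bound (measure_lt_top _ _) (hW.pow_const 2).aestronglyMeasurable (x ^ 2)
    (ae_restrict_of_forall_mem (measurableSet_le hW measurable_const) fun ω hω => by
      rw [norm_of_nonneg (sq_nonneg _)]
      exact pow_le_pow_left₀ (hW0 ω) hω 2)

theorem truncatedSecondMoment_sub_mem_Icc (hW : Measurable W) (hW0 : ∀ ω, 0 ≤ W ω)
    {u v : ℝ} (hu : 0 ≤ u) (huv : u ≤ v) :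
    truncatedSecondMoment P W v - truncatedSecondMoment P W u ∈
      Icc (u ^ 2 * (P.real {ω | u < W ω} - P.real {ω | v < W ω}))
        (v ^ 2 * (P.real {ω | u < W ω} - P.real {ω | v < W ω})) := by
  set S := {ω | W ω ≤ v} \ {ω | W ω ≤ u}
  have hS : MeasurableSet S :=
    (measurableSet_le hW measurable_const).diff (measurableSet_le hW measurable_const)
  have hS_eq : S = {ω | u < W ω} \ {ω | v < W ω} := by
    ext ω
    simp [S, and_comm]
  have hmeas : P.real S = P.real {ω | u < W ω} - P.real {ω | v < W ω} :=
    hS_eq ▸ measureReal_sdiff (fun _ h => huv.trans_lt h) (measurableSet_lt measurable_const hW)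
  have hint := integrableOn_sq_le (P := P) hW hW0 v
  rw [truncatedSecondMoment, truncatedSecondMoment,
    ← setIntegral_sdiff (measurableSet_le hW measurable_const) hint (fun _ h => h.trans huv),
    ← hmeas, mul_comm (u ^ 2), mul_comm (v ^ 2), ← smul_eq_mul, ← smul_eq_mul,
    ← setIntegral_const, ← setIntegral_const]
  constructor
  · exact setIntegral_mono_on integrableOn_const (hint.mono_set sdiff_subset) hS
      fun ω hω => pow_le_pow_left₀ hu (not_le.1 hω.2).le 2
  · exact setIntegral_mono_on (hint.mono_set sdiff_subset) integrableOn_const hS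
      fun ω hω => pow_le_pow_left₀ (hW0 ω) hω.1 2

theorem hasSum_sub_geometric {T : ℝ → ℝ} (hT : Antitone T) (hT0 : Tendsto T atTop (𝓝 0))
    {c x : ℝ} (hc : 1 < c) (hx : 0 < x) :
    HasSum (fun k : ℕ => T (c ^ k * x) - T (c ^ (k + 1) * x)) (T x) := by
  have hmono : Monotone fun k : ℕ => c ^ k * x := fun i j hij =>
    mul_le_mul_of_nonneg_right (pow_le_pow_right₀ hc.le hij) hx.le
  refine (hasSum_iff_tendsto_nat_of_nonneg (fun k => sub_nonneg.2 (hT (hmono k.le_succ))) _).2 ?_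
  have hlim := (tendsto_const_nhds (x := T x)).sub
    (hT0.comp ((tendsto_pow_atTop_atTop_of_one_lt hc).atTop_mul_const hx))
  rw [sub_zero] at hlim
  refine hlim.congr fun n => ?_
  rw [Finset.sum_range_sub' (fun k => T (c ^ k * x)), pow_zero, one_mul]
  rfl

theorem antitone_measureReal_lt : Antitone fun x => P.real {ω | x < W ω} :=
  fun _ _ hxy => measureReal_mono fun _ h => hxy.trans_lt h

theorem measureReal_lt_sub_mem_Icc (hW : Measurable W) (hW0 : ∀ ω, 0 ≤ W ω) {c ε y : ℝ}
    (hc : 1 ≤ c) (hy : 0 < y)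
    (hVy : (1 - ε) * y ≤ truncatedSecondMoment P W y ∧ truncatedSecondMoment P W y ≤ (1 + ε) * y)
    (hVcy : (1 - ε) * (c * y) ≤ truncatedSecondMoment P W (c * y) ∧
      truncatedSecondMoment P W (c * y) ≤ (1 + ε) * (c * y)) :
    P.real {ω | y < W ω} - P.real {ω | c * y < W ω} ∈
      Icc (((1 - ε) * c - (1 + ε)) / (c ^ 2 * y)) (((1 + ε) * c - (1 - ε)) / y) := by
  obtain ⟨hlo, hup⟩ := truncatedSecondMoment_sub_mem_Icc (P := P) hW hW0 hy.le
    (le_mul_of_one_le_left hy.le hc)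
  constructor
  · rw [div_le_iff₀ (by positivity)]
    nlinarith
  · rw [le_div_iff₀ hy]
    nlinarith

theorem mul_measureReal_lt_mem_Icc (hW : Measurable W) (hW0 : ∀ ω, 0 ≤ W ω) {c ε x : ℝ}
    (hc : 1 < c) (hx : 0 < x)
    (hV : ∀ y ≥ x, (1 - ε) * y ≤ truncatedSecondMoment P W y ∧
      truncatedSecondMoment P W y ≤ (1 + ε) * y) :
    x * P.real {ω | x < W ω} ∈ Icc (c * ((1 - ε) * c - (1 + ε)) / ((c - 1) * c ^ 2))
      (c * ((1 + ε) * c - (1 - ε)) / (c - 1)) := by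
  have hterm (k : ℕ) : P.real {ω | c ^ k * x < W ω} - P.real {ω | c ^ (k + 1) * x < W ω} ∈
      Icc (c⁻¹ ^ k * (((1 - ε) * c - (1 + ε)) / (c ^ 2 * x)))
        (c⁻¹ ^ k * (((1 + ε) * c - (1 - ε)) / x)) := by
    have hy : x ≤ c ^ k * x := le_mul_of_one_le_left hx.le (one_le_pow₀ hc.le)
    have h := measureReal_lt_sub_mem_Icc (P := P) hW hW0 hc.le (hx.trans_le hy) (hV _ hy)
      (hV _ (hy.trans (le_mul_of_one_le_left (hx.trans_le hy).le hc.le)))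
    rw [show c ^ (k + 1) * x = c * (c ^ k * x) by ring, inv_pow]
    convert h using 2 <;> field_simp
  have hr0 : 0 ≤ c⁻¹ := inv_nonneg.2 (by linarith)
  have hr1 : c⁻¹ < 1 := inv_lt_one_of_one_lt₀ hc
  have hsum := hasSum_sub_geometric antitone_measureReal_lt
    (tendsto_measureReal_lt_atTop (P := P) hW) hc hx
  have hgeom := fun K => (hasSum_geometric_of_lt_one hr0 hr1).mul_right K
  have hinv : (1 - c⁻¹)⁻¹ = c / (c - 1) := by field_simp
  have hc1 : c - 1 ≠ 0 := by linarith
  constructor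
  · calc c * ((1 - ε) * c - (1 + ε)) / ((c - 1) * c ^ 2)
        = x * ((1 - c⁻¹)⁻¹ * (((1 - ε) * c - (1 + ε)) / (c ^ 2 * x))) := by
          rw [hinv]; field_simp
      _ ≤ x * P.real {ω | x < W ω} :=
          mul_le_mul_of_nonneg_left (hasSum_le (fun k => (hterm k).1) (hgeom _) hsum) hx.le
  · calc x * P.real {ω | x < W ω}
        ≤ x * ((1 - c⁻¹)⁻¹ * (((1 + ε) * c - (1 - ε)) / x)) :=
          mul_le_mul_of_nonneg_left (hasSum_le (fun k => (hterm k).2) hsum (hgeom _)) hx.le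
      _ = c * ((1 + ε) * c - (1 - ε)) / (c - 1) := by
          rw [hinv]; field_simp

theorem tendsto_mul_measureReal_lt_of_tendsto_div (hW : Measurable W) (hW0 : ∀ ω, 0 ≤ W ω)
    (hV : Tendsto (fun x => truncatedSecondMoment P W x / x) atTop (𝓝 1)) :
    Tendsto (fun x => x * P.real {ω | x < W ω}) atTop (𝓝 1) := by
  have hbounds : ∀ η > 0, ∀ᶠ x in atTop,
      x * P.real {ω | x < W ω} ∈ Icc ((1 - 2 * η - η ^ 2) / (1 + η)) ((1 + η) ^ 3) := by
    intro η hη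
    have hVη : ∀ᶠ y in atTop, (1 - η ^ 2) * y ≤ truncatedSecondMoment P W y ∧
        truncatedSecondMoment P W y ≤ (1 + η ^ 2) * y := by
      filter_upwards [hV.eventually_const_lt (by nlinarith : 1 - η ^ 2 < 1),
        hV.eventually_lt_const (by nlinarith : 1 < 1 + η ^ 2), eventually_gt_atTop 0]
        with y hlo hup hy
      exact ⟨((lt_div_iff₀ hy).1 hlo).le, ((div_lt_iff₀ hy).1 hup).le⟩
    have hη0 : η ≠ 0 := hη.ne'
    -- `mul_measureReal_lt_mem_Icc` with `c = 1 + η` and `ε = η²`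
    filter_upwards [eventually_forall_ge_atTop.2 hVη, eventually_gt_atTop 0] with x hx hx0
    convert mul_measureReal_lt_mem_Icc hW hW0 (by linarith : 1 < 1 + η) hx0 hx using 2 <;>
      · rw [add_sub_cancel_left]
        field_simp
        ring
  have hη : Tendsto (fun η : ℝ => η) (𝓝[>] 0) (𝓝 0) := nhdsWithin_le_nhds
  have hlo := ((tendsto_const_nhds (x := (1 : ℝ))).sub (hη.const_mul 2)).sub (hη.pow 2) |>.div
    (tendsto_const_nhds.add hη) (by norm_num : (1 : ℝ) + 0 ≠ 0)
  have hup := ((tendsto_const_nhds (x := (1 : ℝ))).add hη).pow 3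
  norm_num at hlo hup
  refine tendsto_of_eventually_bounds hlo hup ?_ ?_
  · filter_upwards [self_mem_nhdsWithin] with η hη b hb
    exact (hbounds η hη).mono fun x hx => hb.trans_le hx.1
  · filter_upwards [self_mem_nhdsWithin] with η hη b hb
    exact (hbounds η hη).mono fun x hx => hx.2.trans_lt hb

end Tail

section Laplace

variable {Ω : Type*} [MeasurableSpace Ω] {P : Measure Ω} [IsFiniteMeasure P] {W : Ω → ℝ}

theorem Ioi_subset_interior_integrableExpSet_neg (hW : Measurable W) (hW0 : ∀ ω, 0 ≤ W ω) :
    Ioi 0 ⊆ interior (integrableExpSet (fun ω => -W ω) P) := by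
  rw [← interior_Ici]
  refine interior_mono fun t ht => ?_
  refine .of_bound (by fun_prop) 1 (.of_forall fun ω => ?_)
  rw [norm_of_nonneg (exp_pos _).le, exp_le_one_iff, mul_neg, neg_nonpos]
  exact mul_nonneg ht (hW0 ω)

theorem integrable_sq_mul_exp_neg_mul (hW : Measurable W) (hW0 : ∀ ω, 0 ≤ W ω) {l : ℝ}
    (hl : 0 < l) : Integrable (fun ω => W ω ^ 2 * exp (-l * W ω)) P := by
  simpa [mul_neg, neg_mul] using integrable_pow_mul_exp_of_mem_interior_integrableExpSet
    (Ioi_subset_interior_integrableExpSet_neg (P := P) hW hW0 hl) 2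

theorem deriv_deriv_integral_exp_neg_mul (hW : Measurable W) (hW0 : ∀ ω, 0 ≤ W ω) {l : ℝ}
    (hl : 0 < l) :
    deriv (deriv fun l => ∫ ω, exp (-l * W ω) ∂P) l = ∫ ω, W ω ^ 2 * exp (-l * W ω) ∂P := by
  have hmgf : (fun l => ∫ ω, exp (-l * W ω) ∂P) = mgf (fun ω => -W ω) P := by
    ext l
    simp [mgf, mul_neg]
  have h2 : deriv (deriv (mgf (fun ω => -W ω) P)) = iteratedDeriv 2 (mgf (fun ω => -W ω) P) := by
    rw [iteratedDeriv_succ, iteratedDeriv_one]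
  rw [hmgf, h2, iteratedDeriv_mgf (Ioi_subset_interior_integrableExpSet_neg hW hW0 hl)]
  simp [mul_neg]

end Laplace

section WithDensity

variable {Ω : Type*} [MeasurableSpace Ω] {μ : Measure Ω} {w : Ω → ℝ}

theorem integral_withDensity_ofReal (hw : Measurable w) (hw0 : ∀ ω, 0 ≤ w ω) (g : Ω → ℝ) :
    ∫ ω, g ω ∂μ.withDensity (fun ω => ENNReal.ofReal (w ω)) = ∫ ω, w ω * g ω ∂μ := by
  rw [integral_withDensity_eq_integral_toReal_smul hw.ennreal_ofReal
    (.of_forall fun _ => ENNReal.ofReal_lt_top)]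
  simp [ENNReal.toReal_ofReal (hw0 _)]

theorem integrable_withDensity_ofReal_iff (hw : Measurable w) (hw0 : ∀ ω, 0 ≤ w ω)
    {g : Ω → ℝ} :
    Integrable g (μ.withDensity fun ω => ENNReal.ofReal (w ω)) ↔
      Integrable (fun ω => w ω * g ω) μ := by
  rw [integrable_withDensity_iff_integrable_smul' hw.ennreal_ofReal
    (.of_forall fun _ => ENNReal.ofReal_lt_top)]
  simp [ENNReal.toReal_ofReal (hw0 _)]

theorem measureReal_withDensity_ofReal (hw : Measurable w) (hw0 : ∀ ω, 0 ≤ w ω) {s : Set Ω}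
    (hs : MeasurableSet s) :
    (μ.withDensity fun ω => ENNReal.ofReal (w ω)).real s = ∫ ω in s, w ω ∂μ := by
  rw [← integral_indicator_one hs, integral_withDensity_ofReal hw hw0, ← integral_indicator hs]
  congr 1 with ω
  by_cases h : ω ∈ s <;> simp [h]

end WithDensity

/-- Let `W ≥ 0` be a random variable whose Laplace transform `χ(λ) = E[e^{-λW}]` satisfies
`χ''(λ) ∼ 1/λ` as `λ → 0+`.  Then `V₂(x) := E[W² 1_{W ≤ x}] ∼ x` as `x → ∞`, and consequently
`P(W > x) ∼ 1/x` as `x → ∞`. -/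
theorem tauberian_tail_of_laplace {Ω : Type*} [MeasurableSpace Ω] (P : Measure Ω)
    [IsProbabilityMeasure P] (W : Ω → ℝ) (hW : Measurable W) (hWnonneg : ∀ ω, 0 ≤ W ω)
    (chi : ℝ → ℝ) (hchi : ∀ l : ℝ, chi l = ∫ ω, Real.exp (-l * W ω) ∂P)
    (hasymp : Tendsto (fun l => l * deriv (deriv chi) l) (𝓝[>] (0 : ℝ)) (𝓝 1)) :
    Tendsto (fun x => (∫ ω, (if W ω ≤ x then (W ω) ^ 2 else 0) ∂P) / x) atTop (𝓝 1) ∧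
    Tendsto (fun x => x * (P {ω | x < W ω}).toReal) atTop (𝓝 1) := by
  have hsq : Measurable fun ω => W ω ^ 2 := hW.pow_const 2
  have hsq0 : ∀ ω, 0 ≤ W ω ^ 2 := fun ω => sq_nonneg _
  set ν := P.withDensity fun ω => ENNReal.ofReal (W ω ^ 2)
  have hL : Tendsto (fun l => l * ∫ ω, exp (-l * W ω) ∂ν) (𝓝[>] 0) (𝓝 1) := by
    refine hasymp.congr' ?_
    filter_upwards [self_mem_nhdsWithin] with l hl
    rw [funext hchi, deriv_deriv_integral_exp_neg_mul hW hWnonneg hl,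
      integral_withDensity_ofReal hsq hsq0]
  have hV : Tendsto (fun x => truncatedSecondMoment P W x / x) atTop (𝓝 1) := by
    refine (tendsto_measureReal_le_div_of_tendsto_mul_integral_exp hWnonneg (fun l hl => ?_) hL
      hW).congr fun x => ?_
    · exact (integrable_withDensity_ofReal_iff hsq hsq0).2
        (integrable_sq_mul_exp_neg_mul hW hWnonneg hl)
    · rw [measureReal_withDensity_ofReal hsq hsq0 (measurableSet_le hW measurable_const)]
      rfl
  refine ⟨hV.congr fun x => ?_, tendsto_mul_measureReal_lt_of_tendsto_div hW hWnonneg hV⟩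
  rw [truncatedSecondMoment, ← integral_indicator (measurableSet_le hW measurable_const)]
  congr 2 with ω
end

section
/- Let φ : ℝ → (0,∞) be differentiable with φ(x) ∼ K x e^{-x} as x → ∞ for some K > 0, and suppose ρ(x) := φ(x) + φ'(x) satisfies ρ'(x) = −ρ(x) + g(φ(x)) on ℝ, where g ≥ 0 is continuous with ∫_0^{φ(0)} e^{φ^{-1}(s)} g(s)/s ds < ∞ (φ being eventually decreasing with inverse φ^{-1} near 0, and e^{φ^{-1}(s)} ∼ (log(1/s))/s as s → 0). Then ρ(x) ∼ K e^{-x} as x → ∞. -/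
open Real MeasureTheory Filter Topology

/-!
Multiplying by `e^x` turns the equation into `(e^x ρ)' = e^x g(φ) ≥ 0`, so `f := e^x ρ` is
monotone, and `f` is the derivative of `F := e^x φ`, which satisfies `F(x) ∼ K x`. A monotone
derivative is squeezed between the difference quotients of `F` over `[x/2, x]` and `[x, 2x]`,
both of which tend to `K`; hence `e^x ρ(x) → K`.
-/

section MonotoneDeriv

variable {F f : ℝ → ℝ}

theorem le_slope_of_monotone_hasDerivAt (hF : ∀ x, HasDerivAt F (f x) x) (hf : Monotone f)
    {a b : ℝ} (hab : a < b) : f a ≤ (F b - F a) / (b - a) := by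
  obtain ⟨c, hc, hslope⟩ := exists_hasDerivAt_eq_slope F f hab
    (fun x _ => (hF x).continuousAt.continuousWithinAt) (fun x _ => hF x)
  exact hslope ▸ hf hc.1.le

theorem slope_le_of_monotone_hasDerivAt (hF : ∀ x, HasDerivAt F (f x) x) (hf : Monotone f)
    {a b : ℝ} (hab : a < b) : (F b - F a) / (b - a) ≤ f b := by
  obtain ⟨c, hc, hslope⟩ := exists_hasDerivAt_eq_slope F f hab
    (fun x _ => (hF x).continuousAt.continuousWithinAt) (fun x _ => hF x)
  exact hslope ▸ hf hc.2.le

theorem tendsto_of_monotone_hasDerivAt_of_tendsto_div (hF : ∀ x, HasDerivAt F (f x) x)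
    (hf : Monotone f) {K : ℝ} (hFK : Tendsto (fun x => F x / x) atTop (𝓝 K)) :
    Tendsto f atTop (𝓝 K) := by
  have hdouble := hFK.comp (tendsto_id.const_mul_atTop two_pos)
  have hhalf := hFK.comp (tendsto_id.atTop_div_const two_pos)
  have hlower : Tendsto (fun x => 2 * (F x / x) - F (x / 2) / (x / 2)) atTop (𝓝 K) := by
    simpa [two_mul] using (hFK.const_mul 2).sub hhalf
  have hupper : Tendsto (fun x => 2 * (F (2 * x) / (2 * x)) - F x / x) atTop (𝓝 K) := by
    simpa [two_mul] using (hdouble.const_mul 2).sub hFK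
  refine tendsto_of_tendsto_of_tendsto_of_le_of_le' hlower hupper ?_ ?_
  all_goals filter_upwards [eventually_gt_atTop 0] with x hx
  · refine (slope_le_of_monotone_hasDerivAt hF hf (half_lt_self hx)).trans_eq' ?_
    field_simp
    ring
  · refine (le_slope_of_monotone_hasDerivAt hF hf (lt_two_mul_self hx)).trans_eq ?_
    field_simp
    ring

end MonotoneDeriv

theorem rho_asymptotic_general (φ g : ℝ → ℝ) (K : ℝ) (hK : 0 < K)
    (hφdiff : Differentiable ℝ φ)
    (hφasymp : Tendsto (fun x => φ x / (K * x * Real.exp (-x))) atTop (𝓝 1))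
    (hgnonneg : ∀ s, 0 ≤ g s)
    (hρ : ∀ x, HasDerivAt (fun y => φ y + deriv φ y) (-(φ x + deriv φ x) + g (φ x)) x) :
    Tendsto (fun x => (φ x + deriv φ x) / (K * Real.exp (-x))) atTop (𝓝 1) := by
  have hF : ∀ x, HasDerivAt (fun y => exp y * φ y) (exp x * (φ x + deriv φ x)) x :=
    fun x => ((hasDerivAt_exp x).mul (hφdiff x).hasDerivAt).congr_deriv (by ring)
  have hf : ∀ x, HasDerivAt (fun y => exp y * (φ y + deriv φ y)) (exp x * g (φ x)) x :=
    fun x => ((hasDerivAt_exp x).mul (hρ x)).congr_deriv (by ring)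
  have hmono : Monotone fun x => exp x * (φ x + deriv φ x) :=
    monotone_of_hasDerivAt_nonneg hf fun x => mul_nonneg (exp_pos x).le (hgnonneg _)
  have hFK : Tendsto (fun x => exp x * φ x / x) atTop (𝓝 K) := by
    have hKφ := hφasymp.const_mul K
    rw [mul_one] at hKφ
    refine hKφ.congr fun x => ?_
    rw [exp_neg]
    field_simp
  have hfK := (tendsto_of_monotone_hasDerivAt_of_tendsto_div hF hmono hFK).div_const K
  rw [div_self hK.ne'] at hfK
  refine hfK.congr fun x => ?_
  rw [exp_neg]
  field_simp

/-- Let `φ : ℝ → (0,∞)` be differentiable with `φ(x) ∼ K x e^{-x}` as `x → ∞` for some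
`K > 0`, and suppose `ρ := φ + φ'` satisfies `ρ' = −ρ + g(φ)` on `ℝ`, where `g ≥ 0` is
continuous with `∫_0^{φ(0)} e^{φ⁻¹(s)} g(s)/s ds < ∞` (`φ` being eventually decreasing with
inverse `φ⁻¹` near `0`, and `e^{φ⁻¹(s)} ∼ log(1/s)/s` as `s → 0+`).  Then
`ρ(x) ∼ K e^{-x}` as `x → ∞`. -/
theorem rho_asymptotic (φ g : ℝ → ℝ) (K : ℝ) (hK : 0 < K)
    (hφpos : ∀ x, 0 < φ x)
    (hφdiff : Differentiable ℝ φ)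
    (hφasymp : Tendsto (fun x => φ x / (K * x * Real.exp (-x))) atTop (𝓝 1))
    (hgcont : Continuous g) (hgnonneg : ∀ s, 0 ≤ g s)
    (hρ : ∀ x, HasDerivAt (fun y => φ y + deriv φ y) (-(φ x + deriv φ x) + g (φ x)) x)
    (φinv : ℝ → ℝ) (x₀ : ℝ)
    (hanti : StrictAntiOn φ (Set.Ici x₀))
    (hinv : ∀ x ∈ Set.Ici x₀, φinv (φ x) = x)
    (hinvasymp : Tendsto (fun s => Real.exp (φinv s) * s / Real.log (1 / s))
      (𝓝[>] (0 : ℝ)) (𝓝 1))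
    (hintegrable : IntegrableOn (fun s => Real.exp (φinv s) * g s / s) (Set.Ioo 0 (φ 0))) :
    Tendsto (fun x => (φ x + deriv φ x) / (K * Real.exp (-x))) atTop (𝓝 1) :=
  rho_asymptotic_general φ g K hK hφdiff hφasymp hgnonneg hρ
end
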